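/- arXiv:1608.00997 — 3 statements merged into one kernel-verified Lean document; each statement's English description precedes it below -/
import Mathlib

section
/- Let (Γ, ψ) be an H-asymptotic couple with asymptotic integration, and γ ∈ Γ nonzero. Then ∫(γ′ − ∫s(γ′)) = γ + (s(γ†) − γ†) = γ − χ(γ), where γ† := ψ(γ) and γ′ := γ + ψ(γ). -/
/-! Writing `c := χ(γ) = ∫ψ(γ)`, we have `ψ(c) = γ† − c` and `c < 0` (by (AC3)), so `ψ(c) > γ†`.
Hence `ψ(γ − c) = γ†`, i.e. `(γ − c)′ = γ′ − c`, while `s(γ′) = ψ(γ) = γ†` since `∫γ′ = γ`.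
Both identities follow because `α ↦ α′` is injective on `Γ ∖ {0}`. -/

namespace AsymptoticCouple

theorem psi_neg {Γ : Type*} [AddGroup Γ] {ψ : Γ → Γ}
    (AC2 : ∀ (α : Γ) (k : ℤ), α ≠ 0 → k ≠ 0 → ψ (k • α) = ψ α)
    {α : Γ} (hα : α ≠ 0) : ψ (-α) = ψ α := by
  simpa using AC2 α (-1) hα (by norm_num)

theorem int_psi_neg {Γ : Type*} [AddGroup Γ] [LinearOrder Γ] {ψ : Γ → Γ}
    (AC3 : ∀ α β : Γ, 0 < α → β ≠ 0 → ψ β < α + ψ α)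
    {int : Γ → Γ} (hint : ∀ α : Γ, int α ≠ 0 ∧ int α + ψ (int α) = α)
    {γ : Γ} (hγ : γ ≠ 0) : int (ψ γ) < 0 := by
  refine lt_of_le_of_ne (not_lt.mp fun hpos => ?_) (hint _).1
  exact (AC3 _ γ hpos hγ).ne (hint _).2.symm

theorem psi_add_eq_of_lt {Γ : Type*} [AddGroup Γ] [LinearOrder Γ] {ψ : Γ → Γ}
    (AC1 : ∀ α β : Γ, α ≠ 0 → β ≠ 0 → α + β ≠ 0 → min (ψ α) (ψ β) ≤ ψ (α + β))
    (AC2 : ∀ (α : Γ) (k : ℤ), α ≠ 0 → k ≠ 0 → ψ (k • α) = ψ α)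
    {α β : Γ} (hα : α ≠ 0) (hβ : β ≠ 0) (hαβ : α + β ≠ 0) (hlt : ψ α < ψ β) :
    ψ (α + β) = ψ α := by
  refine le_antisymm ?_ ?_
  · have h := AC1 (α + β) (-β) hαβ (neg_ne_zero.mpr hβ) (by simpa using hα)
    rw [add_neg_cancel_right, psi_neg AC2 hβ] at h
    exact (min_le_iff.mp h).resolve_right hlt.not_ge
  · simpa [min_eq_left hlt.le] using AC1 α β hα hβ hαβ

section OrderedGroup

variable {Γ : Type*} [AddCommGroup Γ] [LinearOrder Γ] [IsOrderedAddMonoid Γ] {ψ : Γ → Γ}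

theorem strictMonoOn_add_psi
    (AC1 : ∀ α β : Γ, α ≠ 0 → β ≠ 0 → α + β ≠ 0 → min (ψ α) (ψ β) ≤ ψ (α + β))
    (AC3 : ∀ α β : Γ, 0 < α → β ≠ 0 → ψ β < α + ψ α) :
    StrictMonoOn (fun α => α + ψ α) {0}ᶜ := by
  intro a ha b hb hab
  have ha : a ≠ 0 := ha
  have hb : b ≠ 0 := hb
  have hψa := AC3 (b - a) a (sub_pos.mpr hab) ha
  rcases le_or_gt (ψ (b - a)) (ψ b) with h | h
  · calc a + ψ a < a + ((b - a) + ψ (b - a)) := add_lt_add_right hψa a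
      _ ≤ a + ((b - a) + ψ b) := by gcongr
      _ = b + ψ b := by abel
  · have h1 := AC1 (b - a) a (sub_ne_zero.mpr hab.ne') ha (by simpa using hb)
    rw [sub_add_cancel] at h1
    exact add_lt_add_of_lt_of_le hab ((min_le_iff.mp h1).resolve_left h.not_ge)

theorem int_eq_of_add_psi_eq
    (AC1 : ∀ α β : Γ, α ≠ 0 → β ≠ 0 → α + β ≠ 0 → min (ψ α) (ψ β) ≤ ψ (α + β))
    (AC3 : ∀ α β : Γ, 0 < α → β ≠ 0 → ψ β < α + ψ α)
    {int : Γ → Γ} (hint : ∀ α : Γ, int α ≠ 0 ∧ int α + ψ (int α) = α)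
    {α β : Γ} (hβ : β ≠ 0) (h : β + ψ β = α) : int α = β :=
  (strictMonoOn_add_psi AC1 AC3).injOn (hint α).1 hβ ((hint α).2.trans h.symm)

end OrderedGroup

end AsymptoticCouple

open AsymptoticCouple in
theorem stmt_11_general {Γ : Type*} [AddCommGroup Γ] [LinearOrder Γ] [IsOrderedAddMonoid Γ] (ψ : Γ → Γ)
    (AC1 : ∀ α β : Γ, α ≠ 0 → β ≠ 0 → α + β ≠ 0 → min (ψ α) (ψ β) ≤ ψ (α + β))
    (AC2 : ∀ (α : Γ) (k : ℤ), α ≠ 0 → k ≠ 0 → ψ (k • α) = ψ α)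
    (AC3 : ∀ α β : Γ, 0 < α → β ≠ 0 → ψ β < α + ψ α)
    (int : Γ → Γ)
    (hint : ∀ α : Γ, int α ≠ 0 ∧ int α + ψ (int α) = α)
    (γ : Γ) (hγ : γ ≠ 0) :
    int ((γ + ψ γ) - int (ψ (int (γ + ψ γ)))) = γ + (ψ (int (ψ γ)) - ψ γ) ∧
    γ + (ψ (int (ψ γ)) - ψ γ) = γ - int (ψ γ) := by
  set c := int (ψ γ)
  have hc : c < 0 := int_psi_neg AC3 hint hγ
  have hψc : ψ c = ψ γ - c := eq_sub_of_add_eq' (hint (ψ γ)).2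
  have hψγ_lt : ψ γ < ψ (-c) := by
    rw [psi_neg AC2 hc.ne, hψc]
    exact lt_sub_left_of_add_lt (by simpa using hc)
  have hγc : γ - c ≠ 0 := fun h => hψγ_lt.ne (by rw [psi_neg AC2 hc.ne, ← sub_eq_zero.mp h])
  have hψ_sub : ψ (γ - c) = ψ γ := by
    rw [sub_eq_add_neg] at hγc ⊢
    exact psi_add_eq_of_lt AC1 AC2 hγ (neg_ne_zero.mpr hc.ne) hγc hψγ_lt
  have hint_γ' : int (γ + ψ γ) = γ := int_eq_of_add_psi_eq AC1 AC3 hint hγ rfl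
  have hint_sub : int (γ + ψ γ - c) = γ - c :=
    int_eq_of_add_psi_eq AC1 AC3 hint hγc (by rw [hψ_sub]; abel)
  rw [hint_γ']
  change int (γ + ψ γ - c) = _ ∧ _
  rw [hint_sub, hψc]
  constructor <;> abel

/-- Let `(Γ, ψ)` be an H-asymptotic couple with asymptotic integration and
`γ ≠ 0`. Then `∫(γ' − ∫ s(γ')) = γ + (s(γ†) − γ†) = γ − χ(γ)`, where `γ† = ψ γ`,
`γ' = γ + ψ γ`, `s α = ψ (int α)` and `χ γ = int (ψ γ)`. -/
theorem stmt_11 {Γ : Type*} [AddCommGroup Γ] [LinearOrder Γ] [IsOrderedAddMonoid Γ] (ψ : Γ → Γ)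
    (AC1 : ∀ α β : Γ, α ≠ 0 → β ≠ 0 → α + β ≠ 0 → min (ψ α) (ψ β) ≤ ψ (α + β))
    (AC2 : ∀ (α : Γ) (k : ℤ), α ≠ 0 → k ≠ 0 → ψ (k • α) = ψ α)
    (AC3 : ∀ α β : Γ, 0 < α → β ≠ 0 → ψ β < α + ψ α)
    (HC : ∀ α β : Γ, 0 < α → α ≤ β → ψ β ≤ ψ α)
    (int : Γ → Γ)
    (hint : ∀ α : Γ, int α ≠ 0 ∧ int α + ψ (int α) = α)
    (γ : Γ) (hγ : γ ≠ 0) :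
    int ((γ + ψ γ) - int (ψ (int (γ + ψ γ)))) = γ + (ψ (int (ψ γ)) - ψ γ) ∧
    γ + (ψ (int (ψ γ)) - ψ γ) = γ - int (ψ γ) :=
  stmt_11_general ψ AC1 AC2 AC3 int hint γ hγ
end

section
/- Let (Γ, ψ) be an H-asymptotic couple with asymptotic integration. For γ ∈ (Γ^{>0})′ we have ∫γ > −∫s(γ) = −χ(∫γ) > 0. Furthermore, if γ₀, γ₁ ∈ (Γ^{>0})′ and γ₀ ≤ γ₁, then −∫s(γ₀) ≤ −∫s(γ₁). -/
/-!
The map `γ ↦ γ' = γ + ψ γ` is strictly increasing on `Γ ∖ {0}` (by (AC1) and (AC3)), so `∫` is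
monotone and `∫ γ' = γ`. For `γ > 0` put `β = ∫ ψ(γ)`, so `β + ψ β = ψ γ`. Then `β < 0`, since
otherwise (AC3) gives `ψ γ < β + ψ β`; and `-β < γ`, since otherwise (HC) and `ψ(-β) = ψ(β)` give
`ψ β ≤ ψ γ = β + ψ β`, i.e. `β ≥ 0`. Monotonicity of `-∫ s` follows because `∫` is increasing and
`ψ` is decreasing on `Γ^{>0}`.
-/

theorem strictMonoOn_add_psi {Γ : Type*} [AddCommGroup Γ] [LinearOrder Γ] [IsOrderedAddMonoid Γ]
    {ψ : Γ → Γ}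
    (AC1 : ∀ α β : Γ, α ≠ 0 → β ≠ 0 → α + β ≠ 0 → min (ψ α) (ψ β) ≤ ψ (α + β))
    (AC3 : ∀ α β : Γ, 0 < α → β ≠ 0 → ψ β < α + ψ α) :
    StrictMonoOn (fun γ => γ + ψ γ) {0}ᶜ := by
  intro a (ha : a ≠ 0) b (hb : b ≠ 0) hab
  have hd : b - a ≠ 0 := sub_ne_zero.mpr hab.ne'
  have hsum : a + (b - a) = b := add_sub_cancel a b
  have hmin : min (ψ a) (ψ (b - a)) ≤ ψ b := by
    simpa only [hsum] using AC1 a (b - a) ha hd (hsum.symm ▸ hb)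
  rcases le_total (ψ a) (ψ (b - a)) with h | h
  · exact add_lt_add_of_lt_of_le hab ((min_eq_left h).symm.trans_le hmin)
  · have hψ : ψ (b - a) ≤ ψ b := (min_eq_right h).symm.trans_le hmin
    calc a + ψ a < a + ((b - a) + ψ (b - a)) := by gcongr; exact AC3 _ _ (sub_pos.mpr hab) ha
      _ ≤ a + ((b - a) + ψ b) := by gcongr
      _ = b + ψ b := by abel

theorem int_add_psi {Γ : Type*} [AddCommGroup Γ] [LinearOrder Γ] {ψ : Γ → Γ}
    {int : Γ → Γ} (hmono : StrictMonoOn (fun γ => γ + ψ γ) {0}ᶜ)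
    (hint : ∀ α : Γ, int α ≠ 0 ∧ int α + ψ (int α) = α) {γ : Γ} (hγ : γ ≠ 0) :
    int (γ + ψ γ) = γ :=
  hmono.injOn (hint _).1 hγ (hint _).2

theorem monotone_int {Γ : Type*} [AddCommGroup Γ] [LinearOrder Γ] {ψ : Γ → Γ}
    {int : Γ → Γ} (hmono : StrictMonoOn (fun γ => γ + ψ γ) {0}ᶜ)
    (hint : ∀ α : Γ, int α ≠ 0 ∧ int α + ψ (int α) = α) : Monotone int := by
  intro α β hαβ
  rwa [← hmono.le_iff_le (hint α).1 (hint β).1, (hint α).2, (hint β).2]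

theorem psi_neg {Γ : Type*} [AddGroup Γ] {ψ : Γ → Γ}
    (AC2 : ∀ (α : Γ) (k : ℤ), α ≠ 0 → k ≠ 0 → ψ (k • α) = ψ α) {α : Γ}
    (hα : α ≠ 0) : ψ (-α) = ψ α := by
  simpa using AC2 α (-1) hα (by norm_num)

theorem lt_zero_of_add_psi_eq_psi {Γ : Type*} [AddCommGroup Γ] [LinearOrder Γ] {ψ : Γ → Γ}
    (AC3 : ∀ α β : Γ, 0 < α → β ≠ 0 → ψ β < α + ψ α)
    {β γ : Γ} (hβ : β ≠ 0) (hγ : γ ≠ 0) (h : β + ψ β = ψ γ) : β < 0 :=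
  hβ.lt_or_gt.resolve_right fun hpos => (AC3 β γ hpos hγ).ne h.symm

theorem neg_lt_of_add_psi_eq_psi {Γ : Type*} [AddCommGroup Γ] [LinearOrder Γ]
    [IsOrderedAddMonoid Γ] {ψ : Γ → Γ}
    (AC2 : ∀ (α : Γ) (k : ℤ), α ≠ 0 → k ≠ 0 → ψ (k • α) = ψ α)
    (HC : ∀ α β : Γ, 0 < α → α ≤ β → ψ β ≤ ψ α) {β γ : Γ} (hβ : β < 0) (hγ : 0 < γ)
    (h : β + ψ β = ψ γ) : -β < γ := by
  by_contra! hle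
  have hψ : ψ β ≤ β + ψ β := by
    rw [h, ← psi_neg AC2 hβ.ne]
    exact HC γ (-β) hγ hle
  exact hβ.not_ge (le_add_iff_nonneg_left _ |>.mp hψ)

theorem stmt_12_general {Γ : Type*} [AddCommGroup Γ] [LinearOrder Γ] [IsOrderedAddMonoid Γ] (ψ : Γ → Γ)
    (AC1 : ∀ α β : Γ, α ≠ 0 → β ≠ 0 → α + β ≠ 0 → min (ψ α) (ψ β) ≤ ψ (α + β))
    (AC2 : ∀ (α : Γ) (k : ℤ), α ≠ 0 → k ≠ 0 → ψ (k • α) = ψ α)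
    (AC3 : ∀ α β : Γ, 0 < α → β ≠ 0 → ψ β < α + ψ α)
    (HC : ∀ α β : Γ, 0 < α → α ≤ β → ψ β ≤ ψ α)
    (int : Γ → Γ)
    (hint : ∀ α : Γ, int α ≠ 0 ∧ int α + ψ (int α) = α)
    (χ : Γ → Γ) (hχ : ∀ γ : Γ, γ ≠ 0 → χ γ = int (ψ γ)) :
    (∀ α : Γ, (∃ γ : Γ, 0 < γ ∧ γ + ψ γ = α) →
      -(int (ψ (int α))) < int α ∧ -(int (ψ (int α))) = -(χ (int α)) ∧ 0 < -(χ (int α))) ∧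
    (∀ α₀ α₁ : Γ, (∃ γ : Γ, 0 < γ ∧ γ + ψ γ = α₀) → (∃ γ : Γ, 0 < γ ∧ γ + ψ γ = α₁) →
      α₀ ≤ α₁ → -(int (ψ (int α₀))) ≤ -(int (ψ (int α₁)))) := by
  have hmono := strictMonoOn_add_psi AC1 AC3
  constructor
  · rintro _ ⟨γ, hγ, rfl⟩
    obtain ⟨hβ, hβγ⟩ := hint (ψ γ)
    have hneg := lt_zero_of_add_psi_eq_psi AC3 hβ hγ.ne' hβγ
    rw [int_add_psi hmono hint hγ.ne', hχ γ hγ.ne']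
    exact ⟨neg_lt_of_add_psi_eq_psi AC2 HC hneg hγ hβγ, rfl, neg_pos.mpr hneg⟩
  · rintro _ _ ⟨γ₀, hγ₀, rfl⟩ - hle
    have hpos : 0 < int (γ₀ + ψ γ₀) := (int_add_psi hmono hint hγ₀.ne').symm ▸ hγ₀
    have hψ := HC _ _ hpos (monotone_int hmono hint hle)
    exact neg_le_neg (monotone_int hmono hint hψ)

/-- Let `(Γ, ψ)` be an H-asymptotic couple with asymptotic integration.
For `α ∈ (Γ^{>0})'` we have `∫α > −∫s(α) = −χ(∫α) > 0`; moreover if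
`α₀, α₁ ∈ (Γ^{>0})'` and `α₀ ≤ α₁` then `−∫s(α₀) ≤ −∫s(α₁)`. Here `int α` is the unique
nonzero `β` with `β + ψ β = α`, `s α = ψ (int α)`, `χ γ = int (ψ γ)` for `γ ≠ 0`. -/
theorem stmt_12 {Γ : Type*} [AddCommGroup Γ] [LinearOrder Γ] [IsOrderedAddMonoid Γ] (ψ : Γ → Γ)
    (AC1 : ∀ α β : Γ, α ≠ 0 → β ≠ 0 → α + β ≠ 0 → min (ψ α) (ψ β) ≤ ψ (α + β))
    (AC2 : ∀ (α : Γ) (k : ℤ), α ≠ 0 → k ≠ 0 → ψ (k • α) = ψ α)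
    (AC3 : ∀ α β : Γ, 0 < α → β ≠ 0 → ψ β < α + ψ α)
    (HC : ∀ α β : Γ, 0 < α → α ≤ β → ψ β ≤ ψ α)
    (int : Γ → Γ)
    (hint : ∀ α : Γ, int α ≠ 0 ∧ int α + ψ (int α) = α)
    (χ : Γ → Γ) (hχ0 : χ 0 = 0) (hχ : ∀ γ : Γ, γ ≠ 0 → χ γ = int (ψ γ)) :
    (∀ α : Γ, (∃ γ : Γ, 0 < γ ∧ γ + ψ γ = α) →
      -(int (ψ (int α))) < int α ∧ -(int (ψ (int α))) = -(χ (int α)) ∧ 0 < -(χ (int α))) ∧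
    (∀ α₀ α₁ : Γ, (∃ γ : Γ, 0 < γ ∧ γ + ψ γ = α₀) → (∃ γ : Γ, 0 < γ ∧ γ + ψ γ = α₁) →
      α₀ ≤ α₁ → -(int (ψ (int α₀))) ≤ -(int (ψ (int α₁)))) :=
  stmt_12_general ψ AC1 AC2 AC3 HC int hint χ hχ
end

section
/- Let (Γ, ψ) be an H-asymptotic couple with asymptotic integration, and let S ⊆ Γ be a nonempty convex subset without a greatest element having the yardstick property. Then S is jammed if and only if the downward closure S↓ equals Γ^{<0}. -/
/-!
If `S` is jammed, take `w ≠ 0`, put `c = χ w < 0`, and apply jamming to the convex subgroup `Δ` of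
elements infinitesimal with respect to `c`; it is nontrivial since `[χ c] < [c]`. For `γ` far
enough up in `S`, both `γ` and `γ - χ γ` lie in `S` above the jamming point, so `χ γ ∈ Δ`. If also
`|w| ≤ |γ|`, then `ψ γ ≤ ψ w` and hence `χ γ ≤ χ w = c < 0`, so `χ γ` cannot be infinitesimal with
respect to `c`. Hence `|γ| → 0` along `S`, which means `S↓ = Γ^{<0}`. The converse only uses that
the differences `γ₁ - γ₀` of elements of `S` above `γ₀ ≥ -d` lie in `[0, d]`.
-/

/-- A subset `S` of an ordered abelian group is jammed. -/
def IsJammed {Γ : Type*} [AddCommGroup Γ] [LinearOrder Γ] [IsOrderedAddMonoid Γ] (S : Set Γ) : Prop :=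
  S.Nonempty ∧ (¬ ∃ m ∈ S, ∀ x ∈ S, x ≤ m) ∧
    ∀ Δ : AddSubgroup Γ,
      (∀ a ∈ Δ, ∀ b ∈ Δ, ∀ c : Γ, a ≤ c → c ≤ b → c ∈ Δ) → Δ ≠ ⊥ →
      ∃ γ₀ ∈ S, ∀ γ₁ ∈ S, γ₀ < γ₁ → γ₁ - γ₀ ∈ Δ

open ArchimedeanClass

theorem ArchimedeanClass.mem_ballAddSubgroup_of_le_of_le {M : Type*} [AddCommGroup M]
    [LinearOrder M] [IsOrderedAddMonoid M] {c : ArchimedeanClass M} (hc : c ≠ ⊤) {a b x : M}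
    (ha : a ∈ c.ballAddSubgroup) (hb : b ∈ c.ballAddSubgroup) (hax : a ≤ x) (hxb : x ≤ b) :
    x ∈ c.ballAddSubgroup := by
  rw [mem_ballAddSubgroup_iff hc] at ha hb ⊢
  exact (lt_min ha hb).trans_le (min_le_mk_of_le_of_le hax hxb)

section DownwardClosure

variable {Γ : Type*} [AddCommGroup Γ] [LinearOrder Γ] [IsOrderedAddMonoid Γ] {S : Set Γ}

theorem isJammed_of_downwardClosure_eq_Iio (hS : S.Nonempty)
    (hnomax : ¬ ∃ m ∈ S, ∀ x ∈ S, x ≤ m)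
    (hdown : {x : Γ | ∃ a ∈ S, x ≤ a} = {x : Γ | x < 0}) : IsJammed S := by
  have hmem (x : Γ) : (∃ a ∈ S, x ≤ a) ↔ x < 0 := Set.ext_iff.mp hdown x
  refine ⟨hS, hnomax, fun Δ hΔconv hΔ => ?_⟩
  obtain ⟨d, hdΔ, hd⟩ := Δ.bot_or_exists_ne_zero.resolve_left hΔ
  obtain ⟨γ₀, hγ₀, hdγ₀⟩ := (hmem (-|d|)).2 (neg_neg_of_pos (abs_pos.mpr hd))
  refine ⟨γ₀, hγ₀, fun γ₁ hγ₁ hlt => ?_⟩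
  have hγ₁neg : γ₁ < 0 := (hmem γ₁).1 ⟨γ₁, hγ₁, le_rfl⟩
  refine hΔconv 0 Δ.zero_mem |d| (abs_mem_iff.mpr hdΔ) _ (sub_nonneg.mpr hlt.le) ?_
  calc γ₁ - γ₀ ≤ -γ₀ := by simpa using hγ₁neg.le
    _ ≤ |d| := neg_le.mp hdγ₀

theorem downwardClosure_eq_Iio_of_exists_abs_lt (hnomax : ¬ ∃ m ∈ S, ∀ x ∈ S, x ≤ m)
    (htail : ∀ w : Γ, w ≠ 0 → ∃ γ₀ ∈ S, ∀ γ ∈ S, γ₀ < γ → |γ| < |w|) :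
    {x : Γ | ∃ a ∈ S, x ≤ a} = {x : Γ | x < 0} := by
  push Not at hnomax
  ext x
  constructor
  · rintro ⟨a, ha, hxa⟩
    refine hxa.trans_lt (not_le.mp fun ha0 => ?_)
    obtain ⟨g, hg, hag⟩ := hnomax a ha
    have hg0 : 0 < g := ha0.trans_lt hag
    obtain ⟨γ₀, hγ₀, hsmall⟩ := htail g hg0.ne'
    obtain ⟨γ, hγ, hlt⟩ := hnomax (max γ₀ g) (max_rec' (· ∈ S) hγ₀ hg)
    rw [max_lt_iff] at hlt
    have hγg := hsmall γ hγ hlt.1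
    rw [abs_of_pos hg0, abs_of_pos (hg0.trans hlt.2)] at hγg
    exact hγg.not_gt hlt.2
  · intro hx
    obtain ⟨γ₀, hγ₀, hsmall⟩ := htail x hx.ne
    obtain ⟨γ, hγ, hlt⟩ := hnomax γ₀ hγ₀
    refine ⟨γ, hγ, ?_⟩
    calc x = -|x| := by rw [abs_of_neg hx, neg_neg]
      _ ≤ -|γ| := neg_le_neg (hsmall γ hγ hlt).le
      _ ≤ γ := neg_abs_le γ

end DownwardClosure

section HAsymptoticCouple

variable {Γ : Type*} [AddCommGroup Γ] [LinearOrder Γ] {ψ int : Γ → Γ}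

theorem psi_abs (AC2 : ∀ (α : Γ) (k : ℤ), α ≠ 0 → k ≠ 0 → ψ (k • α) = ψ α) {γ : Γ}
    (hγ : γ ≠ 0) : ψ |γ| = ψ γ := by
  rcases abs_choice γ with h | h
  · rw [h]
  · rw [h, ← neg_one_zsmul, AC2 γ (-1) hγ (by norm_num)]

theorem int_psi_neg (AC3 : ∀ α β : Γ, 0 < α → β ≠ 0 → ψ β < α + ψ α)
    (hint : ∀ α : Γ, int α ≠ 0 ∧ int α + ψ (int α) = α) {γ : Γ} (hγ : γ ≠ 0) :
    int (ψ γ) < 0 := by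
  obtain ⟨hne, hsum⟩ := hint (ψ γ)
  refine hne.lt_or_gt.resolve_right fun hpos => ?_
  have h := AC3 _ γ hpos hγ
  rw [hsum] at h
  exact lt_irrefl _ h

variable [IsOrderedAddMonoid Γ]

theorem psi_le_psi_of_mk_le (AC2 : ∀ (α : Γ) (k : ℤ), α ≠ 0 → k ≠ 0 → ψ (k • α) = ψ α)
    (HC : ∀ α β : Γ, 0 < α → α ≤ β → ψ β ≤ ψ α) {u v : Γ} (hu : u ≠ 0) (hv : v ≠ 0)
    (h : mk u ≤ mk v) : ψ u ≤ ψ v := by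
  obtain ⟨n, hn⟩ := mk_le_mk.mp h
  have hn0 : n ≠ 0 := by
    rintro rfl
    exact hv (abs_nonpos_iff.mp (by simpa using hn))
  have hnu : (n : ℤ) • u ≠ 0 := smul_ne_zero (by exact_mod_cast hn0) hu
  calc ψ u = ψ |(n : ℤ) • u| := by rw [psi_abs AC2 hnu, AC2 u n hu (by exact_mod_cast hn0)]
    _ ≤ ψ |v| := HC _ _ (abs_pos.mpr hv) (by rwa [natCast_zsmul, abs_nsmul])
    _ = ψ v := psi_abs AC2 hv

theorem mk_lt_mk_int_psi (AC2 : ∀ (α : Γ) (k : ℤ), α ≠ 0 → k ≠ 0 → ψ (k • α) = ψ α)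
    (AC3 : ∀ α β : Γ, 0 < α → β ≠ 0 → ψ β < α + ψ α)
    (HC : ∀ α β : Γ, 0 < α → α ≤ β → ψ β ≤ ψ α)
    (hint : ∀ α : Γ, int α ≠ 0 ∧ int α + ψ (int α) = α) {γ : Γ} (hγ : γ ≠ 0) :
    mk γ < mk (int (ψ γ)) := by
  by_contra! h
  have hc := int_psi_neg AC3 hint hγ
  have hψ : ψ γ < ψ (int (ψ γ)) :=
    calc ψ γ = int (ψ γ) + ψ (int (ψ γ)) := (hint (ψ γ)).2.symm
      _ < ψ (int (ψ γ)) := add_lt_of_neg_left _ hc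
  exact hψ.not_ge (psi_le_psi_of_mk_le AC2 HC hc.ne hγ h)

theorem int_le_int_of_le_of_mk_le (AC2 : ∀ (α : Γ) (k : ℤ), α ≠ 0 → k ≠ 0 → ψ (k • α) = ψ α)
    (HC : ∀ α β : Γ, 0 < α → α ≤ β → ψ β ≤ ψ α)
    (hint : ∀ α : Γ, int α ≠ 0 ∧ int α + ψ (int α) = α) {α α' : Γ} (h : α ≤ α')
    (hmk : mk (int α') ≤ mk (int α)) : int α ≤ int α' := by
  have hψ := psi_le_psi_of_mk_le AC2 HC (hint α').1 (hint α).1 hmk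
  refine le_of_add_le_add_right (a := ψ (int α)) ?_
  calc int α + ψ (int α) = α := (hint α).2
    _ ≤ α' := h
    _ = int α' + ψ (int α') := (hint α').2.symm
    _ ≤ int α' + ψ (int α) := by gcongr

theorem IsJammed.exists_abs_lt (AC2 : ∀ (α : Γ) (k : ℤ), α ≠ 0 → k ≠ 0 → ψ (k • α) = ψ α)
    (AC3 : ∀ α β : Γ, 0 < α → β ≠ 0 → ψ β < α + ψ α)
    (HC : ∀ α β : Γ, 0 < α → α ≤ β → ψ β ≤ ψ α)
    (hint : ∀ α : Γ, int α ≠ 0 ∧ int α + ψ (int α) = α)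
    {χ : Γ → Γ} (hχ : ∀ γ : Γ, γ ≠ 0 → χ γ = int (ψ γ)) {S : Set Γ} (hJ : IsJammed S)
    (hyard : ∃ β ∈ S, ∀ γ ∈ S, β < γ → γ - χ γ ∈ S) {w : Γ} (hw : w ≠ 0) :
    ∃ γ₀ ∈ S, ∀ γ ∈ S, γ₀ < γ → |γ| < |w| := by
  obtain ⟨β, hβ, hβχ⟩ := hyard
  set c := int (ψ w)
  have hc : c < 0 := int_psi_neg AC3 hint hw
  have hctop : mk c ≠ ⊤ := mk_eq_top_iff.not.mpr hc.ne
  set Δ := (mk c).ballAddSubgroup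
  have hΔ : Δ ≠ ⊥ := by
    intro h
    have hmem : int (ψ c) ∈ Δ :=
      (mem_ballAddSubgroup_iff hctop).mpr (mk_lt_mk_int_psi AC2 AC3 HC hint hc.ne)
    rw [h, AddSubgroup.mem_bot] at hmem
    exact (hint _).1 hmem
  obtain ⟨γ₀, hγ₀, htail⟩ :=
    hJ.2.2 Δ (fun _ ha _ hb _ => mem_ballAddSubgroup_of_le_of_le hctop ha hb) hΔ
  refine ⟨max γ₀ β, max_rec' (· ∈ S) hγ₀ hβ, fun γ hγ hlt => ?_⟩
  rw [max_lt_iff] at hlt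
  by_contra! hwγ
  have hγ0 : γ ≠ 0 := abs_pos.mp ((abs_pos.mpr hw).trans_le hwγ)
  have hχneg : χ γ < 0 := hχ γ hγ0 ▸ int_psi_neg AC3 hint hγ0
  have hχΔ : χ γ ∈ Δ := by
    have hγχ : γ < γ - χ γ := lt_sub_iff_add_lt.mpr (add_lt_of_neg_right γ hχneg)
    have h₁ := htail γ hγ hlt.1
    have h₂ := htail (γ - χ γ) (hβχ γ hγ hlt.2) (hlt.1.trans hγχ)
    convert Δ.sub_mem h₁ h₂ using 1
    abel
  have hmk : mk c < mk (χ γ) := (mem_ballAddSubgroup_iff hctop).mp hχΔ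
  have hle : χ γ ≤ c := by
    rw [hχ γ hγ0] at hmk ⊢
    exact int_le_int_of_le_of_mk_le AC2 HC hint
      (psi_le_psi_of_mk_le AC2 HC hγ0 hw (mk_le_mk_of_abs hwγ)) hmk.le
  refine hmk.not_ge (mk_le_mk_of_abs ?_)
  rw [abs_of_neg hc, abs_of_neg hχneg]
  exact neg_le_neg hle

end HAsymptoticCouple

theorem stmt_14_general {Γ : Type*} [AddCommGroup Γ] [LinearOrder Γ] [IsOrderedAddMonoid Γ] (ψ : Γ → Γ)
    (AC2 : ∀ (α : Γ) (k : ℤ), α ≠ 0 → k ≠ 0 → ψ (k • α) = ψ α)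
    (AC3 : ∀ α β : Γ, 0 < α → β ≠ 0 → ψ β < α + ψ α)
    (HC : ∀ α β : Γ, 0 < α → α ≤ β → ψ β ≤ ψ α)
    (int : Γ → Γ)
    (hint : ∀ α : Γ, int α ≠ 0 ∧ int α + ψ (int α) = α)
    (χ : Γ → Γ) (hχ : ∀ γ : Γ, γ ≠ 0 → χ γ = int (ψ γ))
    (S : Set Γ) (hS : S.Nonempty)
    (hnomax : ¬ ∃ m ∈ S, ∀ x ∈ S, x ≤ m)
    (hyard : ∃ β ∈ S, ∀ γ ∈ S, β < γ → γ - χ γ ∈ S) :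
    IsJammed S ↔ {x : Γ | ∃ a ∈ S, x ≤ a} = {x : Γ | x < 0} :=
  ⟨fun hJ => downwardClosure_eq_Iio_of_exists_abs_lt hnomax fun _ hw =>
      hJ.exists_abs_lt AC2 AC3 HC hint hχ hyard hw,
    isJammed_of_downwardClosure_eq_Iio hS hnomax⟩

/-- Let `(Γ, ψ)` be an H-asymptotic couple with asymptotic integration and
contraction map `χ`, and `S ⊆ Γ` nonempty, convex, without a greatest element, with the
yardstick property. Then `S` is jammed iff its downward closure equals `Γ^{<0}`. -/
theorem stmt_14 {Γ : Type*} [AddCommGroup Γ] [LinearOrder Γ] [IsOrderedAddMonoid Γ] (ψ : Γ → Γ)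
    (AC1 : ∀ α β : Γ, α ≠ 0 → β ≠ 0 → α + β ≠ 0 → min (ψ α) (ψ β) ≤ ψ (α + β))
    (AC2 : ∀ (α : Γ) (k : ℤ), α ≠ 0 → k ≠ 0 → ψ (k • α) = ψ α)
    (AC3 : ∀ α β : Γ, 0 < α → β ≠ 0 → ψ β < α + ψ α)
    (HC : ∀ α β : Γ, 0 < α → α ≤ β → ψ β ≤ ψ α)
    (int : Γ → Γ)
    (hint : ∀ α : Γ, int α ≠ 0 ∧ int α + ψ (int α) = α)
    (χ : Γ → Γ) (hχ0 : χ 0 = 0) (hχ : ∀ γ : Γ, γ ≠ 0 → χ γ = int (ψ γ))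
    (S : Set Γ) (hS : S.Nonempty)
    (hconv : ∀ a ∈ S, ∀ b ∈ S, ∀ c : Γ, a ≤ c → c ≤ b → c ∈ S)
    (hnomax : ¬ ∃ m ∈ S, ∀ x ∈ S, x ≤ m)
    (hyard : ∃ β ∈ S, ∀ γ ∈ S, β < γ → γ - χ γ ∈ S) :
    IsJammed S ↔ {x : Γ | ∃ a ∈ S, x ≤ a} = {x : Γ | x < 0} :=
  stmt_14_general ψ AC2 AC3 HC int hint χ hχ S hS hnomax hyard
end
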